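/- Let t ∈ ℚ with t > 0 and t ≠ 1. The map Φ₁ sending an affine point (x,y) ∈ E_t(ℚ) with y ≠ 0 to the pair ((x+t²)/y, t(x+1)/y) is a bijection from E_t(ℚ) \ A_t onto C_t'(ℚ); in particular, every affine point of E_t(ℚ) not in A_t has y ≠ 0, and the image pair (r,s) always satisfies r·s·(1−r²) ≠ 0 and (1−r²)·s = t·r·(1−s²). -/

import Mathlib

open WeierstrassCurve WeierstrassCurve.Affine

noncomputable section

/-- The elliptic curve `E_t : y² = x(x+1)(x+t²) = x³ + (1+t²)x² + t²x` over `ℚ`. -/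
def Ecurve (t : ℚ) : WeierstrassCurve.Affine ℚ :=
  { a₁ := 0, a₂ := 1 + t ^ 2, a₃ := 0, a₄ := t ^ 2, a₆ := 0 }

/-- The coordinates of the seven affine points of `A_t`. -/
def Acoords (t : ℚ) : Set (ℚ × ℚ) :=
  {(0, 0), (-1, 0), (-t ^ 2, 0), (-t, t * (t - 1)), (-t, -(t * (t - 1))),
    (t, t * (t + 1)), (t, -(t * (t + 1)))}

/-- The subset `A_t` of `E_t(ℚ)`: the point at infinity together with the seven affine
points whose coordinates lie in `Acoords t`. -/
def Aset (t : ℚ) : Set (Ecurve t).Point :=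
  {P | P = 0 ∨ ∃ (x y : ℚ) (h : (Ecurve t).Nonsingular x y),
    (x, y) ∈ Acoords t ∧ P = Point.some _ _ h}

/-- `C_t'(ℚ)`: pairs `(r, s)` with `r·s·(1−r²) ≠ 0` and `(1−r²)·s = t·r·(1−s²)`. -/
def Cset (t : ℚ) : Set (ℚ × ℚ) :=
  {p | p.1 * p.2 * (1 - p.1 ^ 2) ≠ 0 ∧
    (1 - p.1 ^ 2) * p.2 = t * p.1 * (1 - p.2 ^ 2)}

/-- The map `Φ₂ : (r, s) ↦ (|1−r²|/|2r|, (1+r²)/|2r|, t(1+s²)/|2s|)`. -/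
def Phi2 (t : ℚ) (p : ℚ × ℚ) : ℚ × ℚ × ℚ :=
  (|1 - p.1 ^ 2| / |2 * p.1|, (1 + p.1 ^ 2) / |2 * p.1|, t * (1 + p.2 ^ 2) / |2 * p.2|)

/-- The map `Φ₁` on coordinates of affine points of `E_t(ℚ)`. -/
def Phi1 (t x y : ℚ) : ℚ × ℚ := ((x + t ^ 2) / y, t * (x + 1) / y)

/-!
On the curve, `Φ₁` collapses the 2-torsion points (`y = 0`) and sends the four points with
`x = ±t` to `r = ±1`. Away from these points it is inverted by a rational map `Ψ₁` of the
plane that does not involve the curve at all, and the relation defining `C_t'` is exactly the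
condition for `Ψ₁(r, s)` to lie on `E_t`.
-/

-- Solving `r = (x + t²)/y`, `s = t(x + 1)/y` gives `tr − s = t(t² − 1)/y` and `ts − r = x(t² − 1)/y`.
def Psi1 (t : ℚ) (p : ℚ × ℚ) : ℚ × ℚ :=
  (t * (t * p.2 - p.1) / (t * p.1 - p.2), t * (t ^ 2 - 1) / (t * p.1 - p.2))

section

variable {t x y : ℚ}

lemma Ecurve_equation_iff : (Ecurve t).Equation x y ↔ y ^ 2 = x * (x + 1) * (x + t ^ 2) := by
  rw [equation_iff]
  simp only [Ecurve]
  constructor <;> intro h <;> linear_combination h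

lemma Ecurve_nonsingular_of_ne_zero (h : (Ecurve t).Equation x y) (hy : y ≠ 0) :
    (Ecurve t).Nonsingular x y := by
  rw [nonsingular_iff']
  refine ⟨h, Or.inr fun hc => hy ?_⟩
  simp only [Ecurve] at hc
  linarith

lemma some_mem_Aset_iff (h : (Ecurve t).Nonsingular x y) :
    Point.some _ _ h ∈ Aset t ↔ (x, y) ∈ Acoords t := by
  constructor
  · rintro (h0 | ⟨x', y', h', hc, hP⟩)
    · cases h0
    · rw [Point.some.injEq] at hP
      rwa [hP.1, hP.2]
  · exact fun hc => Or.inr ⟨x, y, h, hc, rfl⟩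

lemma mem_Acoords_iff (heq : y ^ 2 = x * (x + 1) * (x + t ^ 2)) :
    (x, y) ∈ Acoords t ↔ y = 0 ∨ x = t ∨ x = -t := by
  simp only [Acoords, Set.mem_insert_iff, Set.mem_singleton_iff, Prod.mk.injEq]
  constructor
  · rintro (⟨-, hy⟩ | ⟨-, hy⟩ | ⟨-, hy⟩ | ⟨hx, -⟩ | ⟨hx, -⟩ | ⟨hx, -⟩ | ⟨hx, -⟩) <;> simp [*]
  · rintro (rfl | rfl | rfl)
    · have : x * (x + 1) * (x + t ^ 2) = 0 := by linear_combination -heq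
      rcases mul_eq_zero.1 this with h | h
      · rcases mul_eq_zero.1 h with h | h
        · simp [h]
        · simp [eq_neg_of_add_eq_zero_left h]
      · simp [eq_neg_of_add_eq_zero_left h]
    · have : y ^ 2 = (x * (x + 1)) ^ 2 := by linear_combination heq
      rcases sq_eq_sq_iff_eq_or_eq_neg.1 this with h | h <;> simp [h]
    · have : y ^ 2 = (t * (t - 1)) ^ 2 := by linear_combination heq
      rcases sq_eq_sq_iff_eq_or_eq_neg.1 this with h | h <;> simp [h]

lemma Phi1_mem_Cset_iff (ht0 : t ≠ 0) (heq : y ^ 2 = x * (x + 1) * (x + t ^ 2)) (hy : y ≠ 0) :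
    Phi1 t x y ∈ Cset t ↔ x ≠ t ∧ x ≠ -t := by
  have hx : x * (x + 1) * (x + t ^ 2) ≠ 0 := heq ▸ pow_ne_zero 2 hy
  simp only [ne_eq, mul_eq_zero, not_or] at hx
  have hr : 1 - (Phi1 t x y).1 ^ 2 = (x + t ^ 2) * (x - t) * (x + t) / y ^ 2 := by
    simp only [Phi1]
    field_simp
    linear_combination heq
  have hrel : (1 - (Phi1 t x y).1 ^ 2) * (Phi1 t x y).2 =
      t * (Phi1 t x y).1 * (1 - (Phi1 t x y).2 ^ 2) := by
    simp only [Phi1]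
    field_simp
    linear_combination (1 - t ^ 2) * heq
  change _ ∧ _ ↔ _
  rw [and_iff_left hrel, hr]
  simp [Phi1, ht0, hy, hx, sub_eq_zero, add_eq_zero_iff_eq_neg]

lemma Phi1_Psi1 (ht0 : t ≠ 0) (ht2 : t ^ 2 ≠ 1) {p : ℚ × ℚ} (hd : t * p.1 - p.2 ≠ 0) :
    Phi1 t (Psi1 t p).1 (Psi1 t p).2 = p := by
  have ht2' : t ^ 2 - 1 ≠ 0 := sub_ne_zero.2 ht2
  simp only [Phi1, Psi1, Prod.ext_iff]
  constructor <;> field_simp <;> ring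

lemma Psi1_Phi1 (ht0 : t ≠ 0) (ht2 : t ^ 2 ≠ 1) (hy : y ≠ 0) : Psi1 t (Phi1 t x y) = (x, y) := by
  have hd : t * (Phi1 t x y).1 - (Phi1 t x y).2 = t * (t ^ 2 - 1) / y := by
    simp only [Phi1]
    field_simp
    ring
  have ht2' : t ^ 2 - 1 ≠ 0 := sub_ne_zero.2 ht2
  rw [Psi1, hd]
  simp only [Phi1, Prod.ext_iff]
  constructor <;> field_simp
  ring

lemma mul_fst_sub_snd_ne_zero_of_mem_Cset (ht2 : t ^ 2 ≠ 1) {p : ℚ × ℚ} (hp : p ∈ Cset t) :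
    t * p.1 - p.2 ≠ 0 := by
  obtain ⟨r, s⟩ := p
  obtain ⟨hne, hrel⟩ := hp
  intro hd
  obtain rfl : s = t * r := by linear_combination -hd
  have : t * r * r ^ 2 * (t ^ 2 - 1) = 0 := by linear_combination hrel
  simp only [mul_eq_zero, pow_eq_zero_iff, ne_eq, OfNat.ofNat_ne_zero, not_false_eq_true,
    sub_eq_zero, ht2, or_false, not_or] at this hne
  tauto

lemma Psi1_equation {p : ℚ × ℚ} (hp : p ∈ Cset t) (hd : t * p.1 - p.2 ≠ 0) :
    (Psi1 t p).2 ^ 2 = (Psi1 t p).1 * ((Psi1 t p).1 + 1) * ((Psi1 t p).1 + t ^ 2) := by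
  simp only [Psi1]
  field_simp
  linear_combination (-(t ^ 2 * (t ^ 2 - 1) ^ 2)) * hp.2

end

theorem statement11 (t : ℚ) (ht : 0 < t) (ht1 : t ≠ 1) :
    (∀ (x y : ℚ) (h : (Ecurve t).Nonsingular x y), Point.some _ _ h ∉ Aset t → y ≠ 0) ∧
    (∀ (x y : ℚ) (h : (Ecurve t).Nonsingular x y),
      Point.some _ _ h ∉ Aset t → Phi1 t x y ∈ Cset t) ∧
    (∀ p ∈ Cset t, ∃! P : (Ecurve t).Point,
      ∃ (x y : ℚ) (h : (Ecurve t).Nonsingular x y),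
        P = Point.some _ _ h ∧ P ∉ Aset t ∧ Phi1 t x y = p) := by
  have ht0 : t ≠ 0 := ht.ne'
  have ht2 : t ^ 2 ≠ 1 := fun h => ht1 ((pow_eq_one_iff_of_nonneg ht.le two_ne_zero).1 h)
  have hnotA : ∀ (x y : ℚ) (h : (Ecurve t).Nonsingular x y),
      Point.some _ _ h ∉ Aset t → y ≠ 0 ∧ x ≠ t ∧ x ≠ -t := by
    intro x y h hA
    simpa only [some_mem_Aset_iff, mem_Acoords_iff (Ecurve_equation_iff.1 h.1), not_or] using hA
  refine ⟨fun x y h hA => (hnotA x y h hA).1, fun x y h hA => ?_, fun p hp => ?_⟩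
  · obtain ⟨hy, hx⟩ := hnotA x y h hA
    exact (Phi1_mem_Cset_iff ht0 (Ecurve_equation_iff.1 h.1) hy).2 hx
  have hd := mul_fst_sub_snd_ne_zero_of_mem_Cset ht2 hp
  have heq := Psi1_equation hp hd
  have hPhi := Phi1_Psi1 ht0 ht2 hd
  have hy : (Psi1 t p).2 ≠ 0 := div_ne_zero (mul_ne_zero ht0 (sub_ne_zero.2 ht2)) hd
  have hns := Ecurve_nonsingular_of_ne_zero (Ecurve_equation_iff.2 heq) hy
  have hA : Point.some _ _ hns ∉ Aset t := by
    rw [some_mem_Aset_iff, mem_Acoords_iff heq, not_or]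
    exact ⟨hy, not_or.2 ((Phi1_mem_Cset_iff ht0 heq hy).1 (by rwa [hPhi]))⟩
  refine ⟨_, ⟨_, _, hns, rfl, hA, hPhi⟩, ?_⟩
  rintro _ ⟨x, y, h, rfl, hA', rfl⟩
  simp [Psi1_Phi1 ht0 ht2 (hnotA x y h hA').1]

end
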